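/- Let r ≥ 3, f : ℝ^d → ℝ convex and differentiable with minimizer x⋆, and X a twice-differentiable solution of X''(t) + (r/t) X'(t) + ∇f(X t) = 0 on (0,∞) with X(t) → x₀ and t X'(t) → 0 as t → 0⁺. Then for all t > 0, f(X t) - f(x⋆) ≤ (r-1)² ‖x₀ - x⋆‖² / (2 t²). -/

import Mathlib

/-!
Along the flow, the energy (the Lyapunov function with `c = 0`)
`E(t) = t² (f(X t) - f⋆) + ½ ‖(r - 1)(X t - x⋆) + t X'(t)‖²`
has derivative `2t (f(X t) - f⋆) - (r - 1) t ⟪X t - x⋆, ∇f(X t)⟫`, which convexity bounds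
by `(3 - r) t (f(X t) - f⋆) ≤ 0`. So `E` is nonincreasing on `(0, ∞)`, and its limit at `0⁺`
is `(r - 1)² ‖x₀ - x⋆‖² / 2`; dropping the nonnegative kinetic term gives the rate.
-/

open scoped RealInnerProductSpace
open Real Set Filter

theorem HasGradientAt.comp_hasDerivAt {E : Type*} [NormedAddCommGroup E] [InnerProductSpace ℝ E]
    [CompleteSpace E] {f : E → ℝ} {g : E} {X : ℝ → E} {v : E} {t : ℝ}
    (hf : HasGradientAt f g (X t)) (hX : HasDerivAt X v t) :
    HasDerivAt (fun s => f (X s)) ⟪g, v⟫ t := by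
  have h := hf.hasFDerivAt.comp_hasDerivAt t hX
  rwa [InnerProductSpace.toDual_apply_apply] at h

theorem AntitoneOn.le_of_tendsto_nhdsGT {β : Type*} [Preorder β] [TopologicalSpace β]
    [ClosedIciTopology β] {g : ℝ → β} {a t : ℝ} {L : β} (hg : AntitoneOn g (Ioi a))
    (hL : Tendsto g (nhdsWithin a (Ioi a)) (nhds L)) (ht : a < t) : g t ≤ L :=
  ge_of_tendsto hL <| by
    filter_upwards [Ioo_mem_nhdsGT ht] with s hs
    exact hg hs.1 (mem_Ioi.2 ht) hs.2.le

section NesterovFlow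

variable {E : Type*} [NormedAddCommGroup E] [InnerProductSpace ℝ E]
  (r : ℝ) (f : E → ℝ) (xstar : E) (X X' : ℝ → E)

noncomputable def flowEnergy (t : ℝ) : ℝ :=
  t ^ 2 * (f (X t) - f xstar) + ‖(r - 1) • (X t - xstar) + t • X' t‖ ^ 2 / 2

variable {r f xstar X X'}

theorem tendsto_flowEnergy_nhdsGT_zero (hf : Continuous f) {x₀ : E}
    (hX0 : Tendsto X (nhdsWithin 0 (Ioi 0)) (nhds x₀))
    (hX'0 : Tendsto (fun t => t • X' t) (nhdsWithin 0 (Ioi 0)) (nhds 0)) :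
    Tendsto (flowEnergy r f xstar X X') (nhdsWithin 0 (Ioi 0))
      (nhds ((r - 1) ^ 2 * ‖x₀ - xstar‖ ^ 2 / 2)) := by
  have ht : Tendsto (fun t : ℝ => t) (nhdsWithin 0 (Ioi 0)) (nhds 0) :=
    tendsto_nhdsWithin_of_tendsto_nhds tendsto_id
  have hpot := (ht.pow 2).mul (((hf.tendsto x₀).comp hX0).sub_const (f xstar))
  have hkin := ((((hX0.sub_const xstar).const_smul (r - 1)).add hX'0).norm.pow 2).div_const 2
  have hE : Tendsto (flowEnergy r f xstar X X') (nhdsWithin 0 (Ioi 0))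
      (nhds (0 ^ 2 * (f x₀ - f xstar) + ‖(r - 1) • (x₀ - xstar) + 0‖ ^ 2 / 2)) :=
    hpot.add hkin
  convert hE using 2
  rw [add_zero, norm_smul, mul_pow, norm_eq_abs, sq_abs]
  ring

variable [CompleteSpace E] {X'' : ℝ → E} {t : ℝ}

theorem hasDerivAt_flowMomentum (hX : HasDerivAt X (X' t) t) (hX' : HasDerivAt X' (X'' t) t)
    (hODE : X'' t + (r / t) • X' t + gradient f (X t) = 0) (ht : t ≠ 0) :
    HasDerivAt (fun s => (r - 1) • (X s - xstar) + s • X' s) (-(t • gradient f (X t))) t := by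
  -- the derivative is `t X'' + r X'`, i.e. `t` times the left side of the ODE minus `t ∇f(X)`
  have hderiv : HasDerivAt (fun s => (r - 1) • (X s - xstar) + s • X' s)
      ((r - 1) • X' t + (t • X'' t + (1 : ℝ) • X' t)) t :=
    ((hX.sub_const xstar).const_smul (r - 1)).add ((hasDerivAt_id t).smul hX')
  refine hderiv.congr_deriv ?_
  have hODE' : t • X'' t + r • X' t + t • gradient f (X t) = 0 := by
    simpa [smul_add, smul_smul, mul_div_cancel₀ r ht] using congrArg (t • ·) hODE
  rw [← sub_eq_zero, ← hODE']
  module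

theorem hasDerivAt_flowEnergy (hf : Differentiable ℝ f) (hX : HasDerivAt X (X' t) t)
    (hX' : HasDerivAt X' (X'' t) t)
    (hODE : X'' t + (r / t) • X' t + gradient f (X t) = 0) (ht : t ≠ 0) :
    HasDerivAt (flowEnergy r f xstar X X')
      (2 * t * (f (X t) - f xstar) - (r - 1) * t * ⟪X t - xstar, gradient f (X t)⟫) t := by
  have hfX := (hf (X t)).hasGradientAt.comp_hasDerivAt hX
  have hpot : HasDerivAt (fun s => s ^ 2 * (f (X s) - f xstar))
      (2 * t * (f (X t) - f xstar) + t ^ 2 * ⟪gradient f (X t), X' t⟫) t :=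
    ((hasDerivAt_pow 2 t).mul (hfX.sub_const (f xstar))).congr_deriv (by norm_num)
  have hkin := (hasDerivAt_flowMomentum (xstar := xstar) hX hX' hODE ht).norm_sq.div_const 2
  refine (hpot.add hkin).congr_deriv ?_
  simp only [inner_neg_right, inner_add_left, real_inner_smul_left, real_inner_smul_right,
    real_inner_comm (X' t)]
  ring

theorem antitoneOn_flowEnergy (hr : 3 ≤ r) (hf : Differentiable ℝ f)
    (hconv : ∀ x y, f y ≥ f x + ⟪gradient f x, y - x⟫) (hmin : ∀ y, f xstar ≤ f y)
    (hX : ∀ t ∈ Ioi (0 : ℝ), HasDerivAt X (X' t) t)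
    (hX' : ∀ t ∈ Ioi (0 : ℝ), HasDerivAt X' (X'' t) t)
    (hODE : ∀ t ∈ Ioi (0 : ℝ), X'' t + (r / t) • X' t + gradient f (X t) = 0) :
    AntitoneOn (flowEnergy r f xstar X X') (Ioi 0) := by
  have hE : ∀ t ∈ Ioi (0 : ℝ), HasDerivAt (flowEnergy r f xstar X X') _ t := fun t ht =>
    hasDerivAt_flowEnergy hf (hX t ht) (hX' t ht) (hODE t ht) (ne_of_gt ht)
  refine antitoneOn_of_hasDerivWithinAt_nonpos (convex_Ioi 0)
    (fun t ht => (hE t ht).continuousAt.continuousWithinAt)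
    (fun t ht => (hE t (interior_subset ht)).hasDerivWithinAt) fun t ht => ?_
  rw [interior_Ioi] at ht
  have hgap : 0 ≤ f (X t) - f xstar := sub_nonneg.2 (hmin (X t))
  have hgap_le : f (X t) - f xstar ≤ ⟪X t - xstar, gradient f (X t)⟫ := by
    have := hconv (X t) xstar
    rw [← neg_sub, inner_neg_right, real_inner_comm] at this
    linarith
  have ht : 0 < t := ht
  linarith [mul_le_mul_of_nonneg_left hgap_le (mul_nonneg (by linarith) ht.le : 0 ≤ (r - 1) * t),
    mul_nonneg (mul_nonneg (sub_nonneg.2 hr) ht.le) hgap]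

end NesterovFlow

theorem su_boyd_candes_flow_rate
    (d : ℕ) (r : ℝ) (hr : 3 ≤ r)
    (f : EuclideanSpace ℝ (Fin d) → ℝ) (hf : Differentiable ℝ f)
    (hconv : ∀ x y, f y ≥ f x + ⟪gradient f x, y - x⟫)
    (xstar : EuclideanSpace ℝ (Fin d)) (hmin : ∀ y, f xstar ≤ f y)
    (x₀ : EuclideanSpace ℝ (Fin d))
    (X X' X'' : ℝ → EuclideanSpace ℝ (Fin d))
    (hX : ∀ t ∈ Set.Ioi (0 : ℝ), HasDerivAt X (X' t) t)
    (hX' : ∀ t ∈ Set.Ioi (0 : ℝ), HasDerivAt X' (X'' t) t)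
    (hODE : ∀ t ∈ Set.Ioi (0 : ℝ),
      X'' t + (r / t) • X' t + gradient f (X t) = 0)
    (hX0 : Tendsto X (nhdsWithin 0 (Set.Ioi 0)) (nhds x₀))
    (hX'0 : Tendsto (fun t => t • X' t) (nhdsWithin 0 (Set.Ioi 0)) (nhds 0)) :
    ∀ t > (0 : ℝ),
      f (X t) - f xstar ≤ (r - 1) ^ 2 * ‖x₀ - xstar‖ ^ 2 / (2 * t ^ 2) := by
  intro t ht
  have hE_le : flowEnergy r f xstar X X' t ≤ (r - 1) ^ 2 * ‖x₀ - xstar‖ ^ 2 / 2 :=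
    (antitoneOn_flowEnergy hr hf hconv hmin hX hX' hODE).le_of_tendsto_nhdsGT
      (tendsto_flowEnergy_nhdsGT_zero hf.continuous hX0 hX'0) ht
  have hpot_le : t ^ 2 * (f (X t) - f xstar) ≤ flowEnergy r f xstar X X' t :=
    le_add_of_nonneg_right (by positivity)
  rw [le_div_iff₀ (by positivity), mul_comm]
  linarith
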